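/- arXiv:1802.09285 — 2 statements merged into one kernel-verified Lean document; each statement's English description precedes it below -/
import Mathlib

section
/- For every integer k ≥ 2, ∫₀^{2πk} cos θ · sin(θ/k) · (∫₀^θ cos τ · cos(τ/k) dτ) dθ = −π k² / (2(k² − 1)). Equivalently, (1/(2πk)) times this iterated integral equals −1/(kα) with α = 4(1 − k⁻²). -/
/-!
Product-to-sum formulas turn `cos τ cos (τ/k)` into `(cos (pτ) + cos (qτ))/2` and
`cos θ sin (θ/k)` into `(sin (pθ) - sin (qθ))/2`, with `p = 1 + 1/k` and `q = 1 - 1/k`.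
Over `[0, 2πk]` both `sin (p·)` and `sin (q·)` run through whole periods, so `sin (pθ) sin (qθ)`
integrates to `0` and `sin² (pθ)`, `sin² (qθ)` to half the length of the interval; what is left
is `(2πk/8)(1/p - 1/q) = -πk²/(2(k² - 1))`.
-/

open Real intervalIntegral

lemma integral_cos_mul (p θ : ℝ) (hp : p ≠ 0) : ∫ x in (0:ℝ)..θ, cos (p * x) = sin (p * θ) / p := by
  rw [integral_comp_mul_left (fun x => cos x) hp, integral_cos]
  simp [div_eq_inv_mul]

lemma integral_cos_mul_mul_cos_mul (a b θ : ℝ) (hsub : a - b ≠ 0) (hadd : a + b ≠ 0) :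
    ∫ τ in (0:ℝ)..θ, cos (a * τ) * cos (b * τ)
      = (sin ((a + b) * θ) / (a + b) + sin ((a - b) * θ) / (a - b)) / 2 := by
  have hsum : ∀ τ, cos (a * τ) * cos (b * τ) = (cos ((a + b) * τ) + cos ((a - b) * τ)) / 2 := by
    intro τ
    rw [add_mul, sub_mul, cos_add, cos_sub]
    ring
  simp only [hsum]
  rw [integral_div, integral_add, integral_cos_mul _ _ hadd, integral_cos_mul _ _ hsub] <;>
    exact (by fun_prop : Continuous _).intervalIntegrable _ _

lemma integral_sin_mul_sq (p T : ℝ) (hp : p ≠ 0) :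
    ∫ x in (0:ℝ)..T, sin (p * x) ^ 2 = (T - sin (p * T) * cos (p * T) / p) / 2 := by
  rw [integral_comp_mul_left (fun x => sin x ^ 2) hp, integral_sin_sq]
  simp only [mul_zero, sin_zero, cos_zero, sub_zero, smul_eq_mul]
  field_simp
  ring

lemma integral_sin_mul_mul_sin_mul (p q T : ℝ) (h : p ^ 2 ≠ q ^ 2) :
    ∫ x in (0:ℝ)..T, sin (p * x) * sin (q * x)
      = (q * sin (p * T) * cos (q * T) - p * cos (p * T) * sin (q * T)) / (p ^ 2 - q ^ 2) := by
  have hderiv : ∀ x, HasDerivAt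
      (fun x => (q * sin (p * x) * cos (q * x) - p * cos (p * x) * sin (q * x)) / (p ^ 2 - q ^ 2))
      (sin (p * x) * sin (q * x)) x := by
    intro x
    have hp := (hasDerivAt_id x).const_mul p
    have hq := (hasDerivAt_id x).const_mul q
    refine ((((hp.sin.const_mul q).mul hq.cos).sub ((hp.cos.const_mul p).mul hq.sin)).div_const
      (p ^ 2 - q ^ 2)).congr_deriv ?_
    simp only [id, mul_one]
    field_simp [sub_ne_zero.mpr h]
    ring
  rw [integral_eq_sub_of_hasDerivAt (fun x _ => hderiv x)
    ((by fun_prop : Continuous _).intervalIntegrable _ _)]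
  simp

lemma integral_sin_sub_sin_mul_sin_div_add_sin_div (p q T : ℝ) (hp : p ≠ 0) (hq : q ≠ 0)
    (hpq : p ^ 2 ≠ q ^ 2) (hpT : sin (p * T) = 0) (hqT : sin (q * T) = 0) :
    ∫ x in (0:ℝ)..T, (sin (p * x) - sin (q * x)) * (sin (p * x) / p + sin (q * x) / q)
      = T / 2 * (1 / p - 1 / q) := by
  have hexpand : ∀ x, (sin (p * x) - sin (q * x)) * (sin (p * x) / p + sin (q * x) / q)
      = sin (p * x) ^ 2 / p - sin (q * x) ^ 2 / q
        + (1 / q - 1 / p) * (sin (p * x) * sin (q * x)) := by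
    intro x
    ring
  have hint : ∀ f : ℝ → ℝ, Continuous f → IntervalIntegrable f MeasureTheory.volume 0 T :=
    fun f hf => hf.intervalIntegrable _ _
  simp only [hexpand]
  rw [integral_add (hint _ (by fun_prop)) (hint _ (by fun_prop)),
    integral_sub (hint _ (by fun_prop)) (hint _ (by fun_prop)), integral_div, integral_div, integral_const_mul,
    integral_sin_mul_sq _ _ hp, integral_sin_mul_sq _ _ hq, integral_sin_mul_mul_sin_mul _ _ _ hpq]
  simp only [hpT, hqT]
  ring

lemma integral_cos_mul_sin_mul_mul_integral_cos_mul_cos_mul (a b T : ℝ) (ha : a ≠ 0) (hb : b ≠ 0)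
    (hsub : a - b ≠ 0) (hadd : a + b ≠ 0) (hsubT : sin ((a - b) * T) = 0)
    (haddT : sin ((a + b) * T) = 0) :
    ∫ θ in (0:ℝ)..T, cos (a * θ) * sin (b * θ) * ∫ τ in (0:ℝ)..θ, cos (a * τ) * cos (b * τ)
      = -(T * b / (4 * (a ^ 2 - b ^ 2))) := by
  have hprod : ∀ θ, cos (a * θ) * sin (b * θ) = (sin ((a + b) * θ) - sin ((a - b) * θ)) / 2 := by
    intro θ
    rw [add_mul, sub_mul, sin_add, sin_sub]
    ring
  have hsq : (a + b) ^ 2 ≠ (a - b) ^ 2 := fun h =>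
    mul_ne_zero (mul_ne_zero four_ne_zero ha) hb (by linear_combination h)
  calc ∫ θ in (0:ℝ)..T, cos (a * θ) * sin (b * θ) * ∫ τ in (0:ℝ)..θ, cos (a * τ) * cos (b * τ)
      = (∫ θ in (0:ℝ)..T, (sin ((a + b) * θ) - sin ((a - b) * θ))
          * (sin ((a + b) * θ) / (a + b) + sin ((a - b) * θ) / (a - b))) / 4 := by
        rw [← integral_div]
        congr 1
        ext θ
        rw [hprod, integral_cos_mul_mul_cos_mul a b θ hsub hadd]
        ring
    _ = -(T * b / (4 * (a ^ 2 - b ^ 2))) := by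
        rw [integral_sin_sub_sin_mul_sin_div_add_sin_div _ _ T hadd hsub hsq haddT hsubT,
          show a ^ 2 - b ^ 2 = (a + b) * (a - b) by ring]
        field_simp
        ring

/-- Averaging coefficient ν₁₃: for every integer k ≥ 2,
∫₀^{2πk} cos θ · sin(θ/k) · (∫₀^θ cos τ · cos(τ/k) dτ) dθ = −πk²/(2(k²−1));
equivalently, (1/(2πk)) times this iterated integral equals −1/(kα) with α = 4(1 − k⁻²). -/
theorem stmt7 (k : ℕ) (hk : 2 ≤ k) :
    (∫ θ in (0:ℝ)..(2 * Real.pi * k),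
        Real.cos θ * Real.sin (θ / k) * ∫ τ in (0:ℝ)..θ, Real.cos τ * Real.cos (τ / k))
      = -(Real.pi * (k : ℝ) ^ 2 / (2 * ((k : ℝ) ^ 2 - 1))) ∧
    (1 / (2 * Real.pi * k)) *
      (∫ θ in (0:ℝ)..(2 * Real.pi * k),
        Real.cos θ * Real.sin (θ / k) * ∫ τ in (0:ℝ)..θ, Real.cos τ * Real.cos (τ / k))
      = -(1 / ((k : ℝ) * (4 * (1 - ((k : ℝ) ^ 2)⁻¹)))) := by
  have hk' : (2 : ℝ) ≤ k := by exact_mod_cast hk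
  have hk0 : (k : ℝ) ≠ 0 := by positivity
  have hsin : ∀ n : ℤ, sin ((1 + n * (k : ℝ)⁻¹) * (2 * π * k)) = 0 := fun n => by
    rw [show (1 + n * (k : ℝ)⁻¹) * (2 * π * k) = ((2 * (k + n) : ℤ) : ℝ) * π by
      push_cast; field_simp, sin_int_mul_pi]
  have hν := integral_cos_mul_sin_mul_mul_integral_cos_mul_cos_mul 1 (k : ℝ)⁻¹ (2 * π * k)
    one_ne_zero (inv_ne_zero hk0) (sub_ne_zero.mpr (inv_lt_one_of_one_lt₀ (by linarith)).ne')
    (by positivity) (by simpa [sub_eq_add_neg] using hsin (-1)) (by simpa using hsin 1)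
  simp only [one_mul, ← div_eq_inv_mul] at hν
  have hmain : (∫ θ in (0:ℝ)..(2 * π * k),
      cos θ * sin (θ / k) * ∫ τ in (0:ℝ)..θ, cos τ * cos (τ / k))
      = -(π * (k : ℝ) ^ 2 / (2 * ((k : ℝ) ^ 2 - 1))) := by
    rw [hν]
    field_simp
    ring
  refine ⟨hmain, ?_⟩
  rw [hmain]
  field_simp
  ring
end

section
/- Under the closed-loop setup below, set T = 2πk/ω, M = 2√(αϑ) · sup_{ξ ∈ D̃} (|F₁(κ‖ξ‖²)| + |F₂(κ‖ξ‖²)|), and ξ(t) = x(t) − γ(t). Suppose x is a solution of the closed-loop system on [t₀, t₀ + T] with ξ(t) ∈ D̃ for all t ∈ [t₀, t₀ + T]. Then: (a) ‖ξ(t) − ξ(t₀)‖ ≤ (ν + M√ω)·(t − t₀) for all t ∈ [t₀, t₀ + T]; (b) if moreover 0 < δ₀ < λ ≤ ρ, (ν + M√ω)·T ≤ (√λ − √δ₀)/√κ, and κ‖ξ(t₀)‖² ≤ δ₀, then κ‖ξ(t)‖² ≤ λ for all t ∈ [t₀, t₀ + T]. -/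
/-- Euclidean norm on ℝ². -/
noncomputable def nrm (a : ℝ × ℝ) : ℝ := Real.sqrt (a.1 ^ 2 + a.2 ^ 2)

/-- Quadratic cost J(ξ) = κ‖ξ‖². -/
noncomputable def Jc (κ : ℝ) (ξ : ℝ × ℝ) : ℝ := κ * (ξ.1 ^ 2 + ξ.2 ^ 2)

/-- Sublevel domain D̃ = {ξ ∈ ℝ² : κ‖ξ‖² ≤ ρ}. -/
def Dtil (κ ρ : ℝ) : Set (ℝ × ℝ) := {ξ | κ * (ξ.1 ^ 2 + ξ.2 ^ 2) ≤ ρ}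

/-- The map ξ ↦ F(κ‖ξ‖²). -/
noncomputable def FJ (κ : ℝ) (F : ℝ → ℝ) (ξ : ℝ × ℝ) : ℝ := F (Jc κ ξ)

/-- Coordinate directions of ℝ². -/
def e2 : Fin 2 → ℝ × ℝ := ![(1, 0), (0, 1)]

/-- First-order Lie derivative ξ ↦ F_j(κ‖ξ‖²)·∂_s(F_i(κ‖ξ‖²))(ξ). -/
noncomputable def lieD (κ : ℝ) (Fj Fi : ℝ → ℝ) (s : Fin 2) (ξ : ℝ × ℝ) : ℝ :=
  FJ κ Fj ξ * fderiv ℝ (FJ κ Fi) ξ (e2 s)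

/-- Second-order Lie derivative ξ ↦ F_k(κ‖ξ‖²)·∂_r(F_j(κ‖ξ‖²)·∂_s(F_i(κ‖ξ‖²)))(ξ). -/
noncomputable def lieD2 (κ : ℝ) (Fk Fj Fi : ℝ → ℝ) (r s : Fin 2) (ξ : ℝ × ℝ) : ℝ :=
  FJ κ Fk ξ * fderiv ℝ (lieD κ Fj Fi s) ξ (e2 r)

/-- The extremum seeking control
u(t) = √(ϑαω)·(F₁(J(x(t) − γ(t)))·cos(ωt) + F₂(J(x(t) − γ(t)))·sin(ωt)). -/
noncomputable def uCtrl (κ ϑ α ω : ℝ) (F1 F2 : ℝ → ℝ) (γ x : ℝ → ℝ × ℝ) (t : ℝ) : ℝ :=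
  Real.sqrt (ϑ * α * ω) *
    (F1 (Jc κ (x t - γ t)) * Real.cos (ω * t) + F2 (Jc κ (x t - γ t)) * Real.sin (ω * t))

/-- x is a solution of the closed-loop unicycle system
dx/dt = u(t)·(cos(Ωt), sin(Ωt)) on [t₀, ∞). -/
def IsSol (κ ϑ α ω Ω : ℝ) (F1 F2 : ℝ → ℝ) (γ : ℝ → ℝ × ℝ) (t₀ : ℝ) (x : ℝ → ℝ × ℝ) : Prop :=
  ∀ t : ℝ, t₀ ≤ t → HasDerivAt x
    (uCtrl κ ϑ α ω F1 F2 γ x t • (Real.cos (Ω * t), Real.sin (Ω * t))) t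

/-- Identify `nrm` with the `L²` product norm. -/
noncomputable def toL2 : (ℝ × ℝ) ≃L[ℝ] WithLp 2 (ℝ × ℝ) :=
  (WithLp.prodContinuousLinearEquiv 2 ℝ ℝ ℝ).symm

lemma nrm_eq_norm_toL2 (a : ℝ × ℝ) : nrm a = ‖toL2 a‖ := by
  rw [toL2, WithLp.prod_norm_eq_of_L2]
  simp [nrm, Real.norm_eq_abs, sq_abs]

lemma nrm_nonneg (a : ℝ × ℝ) : 0 ≤ nrm a := Real.sqrt_nonneg _

/-- Step 1 of the proof of Theorem 3 (properties (P1) and (P3)): a priori one-period bounds.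
With T = 2πk/ω and M = 2√(αϑ)·sup_{ξ∈D̃}(|F₁(κ‖ξ‖²)| + |F₂(κ‖ξ‖²)|):
(a) ‖ξ(t) − ξ(t₀)‖ ≤ (ν + M√ω)(t − t₀) on [t₀, t₀ + T];
(b) if 0 < δ₀ < λ ≤ ρ, (ν + M√ω)T ≤ (√λ − √δ₀)/√κ and κ‖ξ(t₀)‖² ≤ δ₀, then
κ‖ξ(t)‖² ≤ λ on [t₀, t₀ + T]. -/

theorem stmt14 (k : ℕ) (hk : 1 < k) (α κ ρ ν ϑ ω : ℝ)
    (hα : α = 4 * (1 - ((k : ℝ) ^ 2)⁻¹))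
    (hκ : 0 < κ) (hρ : 0 < ρ) (hν : 0 < ν) (hϑ : 0 < ϑ) (hω : 0 < ω)
    (F1 F2 : ℝ → ℝ) (hF1c : Continuous F1) (hF2c : Continuous F2)
    (γ γ' : ℝ → ℝ × ℝ)
    (hγd : ∀ t : ℝ, 0 ≤ t → HasDerivAt γ (γ' t) t)
    (hγb : ∀ t : ℝ, 0 ≤ t → nrm (γ' t) ≤ ν)
    (T M : ℝ) (hT : T = 2 * Real.pi * k / ω)
    (hBdd : BddAbove ((fun ξ => |F1 (Jc κ ξ)| + |F2 (Jc κ ξ)|) '' Dtil κ ρ))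
    (hM : M = 2 * Real.sqrt (α * ϑ) *
      sSup ((fun ξ => |F1 (Jc κ ξ)| + |F2 (Jc κ ξ)|) '' Dtil κ ρ))
    (t₀ : ℝ) (ht₀ : 0 ≤ t₀) (x : ℝ → ℝ × ℝ)
    (hx : ∀ t ∈ Set.Icc t₀ (t₀ + T), HasDerivAt x
      (uCtrl κ ϑ α ω F1 F2 γ x t • (Real.cos ((ω / k) * t), Real.sin ((ω / k) * t))) t)
    (hin : ∀ t ∈ Set.Icc t₀ (t₀ + T), x t - γ t ∈ Dtil κ ρ) :
    (∀ t ∈ Set.Icc t₀ (t₀ + T),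
      nrm ((x t - γ t) - (x t₀ - γ t₀)) ≤ (ν + M * Real.sqrt ω) * (t - t₀)) ∧
    (∀ δ₀ lam : ℝ, 0 < δ₀ → δ₀ < lam → lam ≤ ρ →
      (ν + M * Real.sqrt ω) * T ≤ (Real.sqrt lam - Real.sqrt δ₀) / Real.sqrt κ →
      Jc κ (x t₀ - γ t₀) ≤ δ₀ →
      ∀ t ∈ Set.Icc t₀ (t₀ + T), Jc κ (x t - γ t) ≤ lam) := by
  
  have hk1 : (1:ℝ) < (k:ℝ) := by exact_mod_cast hk
  have hα0 : 0 < α := by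
    rw [hα]
    have : ((k:ℝ)^2)⁻¹ < 1 := by
      rw [inv_lt_one_iff₀]; right; nlinarith
    nlinarith
  -- nonnegativity of the sup
  set S := sSup ((fun ξ => |F1 (Jc κ ξ)| + |F2 (Jc κ ξ)|) '' Dtil κ ρ) with hS
  have h0mem : ((0:ℝ), (0:ℝ)) ∈ Dtil κ ρ := by
    simp [Dtil]; positivity
  have hS0 : 0 ≤ S := by
    have := le_csSup hBdd (Set.mem_image_of_mem _ h0mem)
    have h2 : (0:ℝ) ≤ |F1 (Jc κ ((0:ℝ),(0:ℝ)))| + |F2 (Jc κ ((0:ℝ),(0:ℝ)))| := by positivity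
    linarith
  have hM0 : 0 ≤ M := by
    rw [hM]; positivity
  set C := ν + M * Real.sqrt ω with hC
  have hC0 : 0 < C := by
    have : 0 ≤ M * Real.sqrt ω := by positivity
    linarith
  -- derivative of ξ = x - γ
  set ξ' : ℝ → ℝ × ℝ := fun t =>
    uCtrl κ ϑ α ω F1 F2 γ x t • (Real.cos ((ω / k) * t), Real.sin ((ω / k) * t)) - γ' t with hξ'
  have hder : ∀ t ∈ Set.Icc t₀ (t₀ + T), HasDerivAt (fun t => x t - γ t) (ξ' t) t := by
    intro t ht
    exact (hx t ht).sub (hγd t (le_trans ht₀ ht.1))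
  -- bound on the control
  have huB : ∀ t ∈ Set.Icc t₀ (t₀ + T), |uCtrl κ ϑ α ω F1 F2 γ x t| ≤ M * Real.sqrt ω / 2 := by
    intro t ht
    have hmem := hin t ht
    have hle : |F1 (Jc κ (x t - γ t))| + |F2 (Jc κ (x t - γ t))| ≤ S :=
      le_csSup hBdd (Set.mem_image_of_mem _ hmem)
    have hsq : Real.sqrt (ϑ * α * ω) = Real.sqrt (α * ϑ) * Real.sqrt ω := by
      rw [← Real.sqrt_mul (by positivity)]; ring_nf
    rw [uCtrl, hsq, abs_mul]
    have h1 : |F1 (Jc κ (x t - γ t)) * Real.cos (ω * t) +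
        F2 (Jc κ (x t - γ t)) * Real.sin (ω * t)| ≤ S := by
      calc _ ≤ |F1 (Jc κ (x t - γ t)) * Real.cos (ω * t)| +
            |F2 (Jc κ (x t - γ t)) * Real.sin (ω * t)| := abs_add_le _ _
        _ ≤ |F1 (Jc κ (x t - γ t))| * 1 + |F2 (Jc κ (x t - γ t))| * 1 := by
            rw [abs_mul, abs_mul]
            gcongr
            · exact Real.abs_cos_le_one _
            · exact Real.abs_sin_le_one _
        _ ≤ S := by simpa using hle
    have h2 : |Real.sqrt (α * ϑ) * Real.sqrt ω| = Real.sqrt (α * ϑ) * Real.sqrt ω := by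
      rw [abs_of_nonneg]; positivity
    rw [h2, hM]
    calc Real.sqrt (α * ϑ) * Real.sqrt ω * |_| ≤ Real.sqrt (α * ϑ) * Real.sqrt ω * S := by
          gcongr
      _ = 2 * Real.sqrt (α * ϑ) * S * Real.sqrt ω / 2 := by ring
  -- norm of direction vector
  have hdir : ∀ θ : ℝ, nrm (Real.cos θ, Real.sin θ) = 1 := by
    intro θ
    rw [nrm]
    simp only [Real.cos_sq_add_sin_sq]
    exact Real.sqrt_one
  -- bound on derivative in L2 norm
  have hbound : ∀ t ∈ Set.Icc t₀ (t₀ + T), ‖toL2 (ξ' t)‖ ≤ C := by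
    intro t ht
    have : ‖toL2 (ξ' t)‖ ≤ ‖toL2 (uCtrl κ ϑ α ω F1 F2 γ x t •
        (Real.cos ((ω / k) * t), Real.sin ((ω / k) * t)))‖ + ‖toL2 (γ' t)‖ := by
      rw [hξ', map_sub]
      exact norm_sub_le _ _
    rw [map_smul, norm_smul] at this
    have h1 : ‖toL2 ((Real.cos ((ω / k) * t), Real.sin ((ω / k) * t)))‖ = 1 := by
      rw [← nrm_eq_norm_toL2]; exact hdir _
    rw [h1, mul_one] at this
    have h2 : ‖toL2 (γ' t)‖ ≤ ν := by
      rw [← nrm_eq_norm_toL2]; exact hγb t (le_trans ht₀ ht.1)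
    have h3 := huB t ht
    have hMω : 0 ≤ M * Real.sqrt ω := by positivity
    calc ‖toL2 (ξ' t)‖ ≤ ‖uCtrl κ ϑ α ω F1 F2 γ x t‖ + ν := by linarith
      _ ≤ M * Real.sqrt ω / 2 + ν := by rw [Real.norm_eq_abs]; linarith
      _ ≤ C := by rw [hC]; linarith
  -- part (a)
  have partA : ∀ t ∈ Set.Icc t₀ (t₀ + T),
      nrm ((x t - γ t) - (x t₀ - γ t₀)) ≤ C * (t - t₀) := by
    intro t ht
    have hT0 : 0 ≤ T := by
      rw [hT]; positivity
    have ht₀mem : t₀ ∈ Set.Icc t₀ (t₀ + T) := ⟨le_refl _, by linarith⟩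
    have := (convex_Icc t₀ (t₀ + T)).norm_image_sub_le_of_norm_hasDerivWithin_le
      (f := fun t => toL2 (x t - γ t)) (f' := fun t => toL2 (ξ' t))
      (fun s hs => (toL2.hasFDerivAt.comp_hasDerivAt s (hder s hs)).hasDerivWithinAt)
      hbound ht₀mem ht
    rw [← map_sub] at this
    rw [nrm_eq_norm_toL2]
    calc ‖toL2 ((x t - γ t) - (x t₀ - γ t₀))‖ ≤ C * ‖t - t₀‖ := this
      _ = C * (t - t₀) := by rw [Real.norm_eq_abs, abs_of_nonneg (by linarith [ht.1])]
  refine ⟨partA, ?_⟩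
  -- part (b)
  intro δ₀ lam hδ₀ hδlam hlamρ hTbound hJ0 t ht
  have hlam0 : 0 < lam := lt_trans hδ₀ hδlam
  have hJnrm : ∀ a : ℝ × ℝ, Jc κ a = κ * (nrm a)^2 := by
    intro a
    rw [Jc, nrm, Real.sq_sqrt (by positivity)]
  -- nrm ξ(t₀) ≤ √δ₀/√κ
  have h0 : nrm (x t₀ - γ t₀) ≤ Real.sqrt δ₀ / Real.sqrt κ := by
    have h1 : κ * (nrm (x t₀ - γ t₀))^2 ≤ δ₀ := by rw [← hJnrm]; exact hJ0
    have h2 : (nrm (x t₀ - γ t₀))^2 ≤ δ₀ / κ := by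
      rw [le_div_iff₀ hκ]; linarith
    calc nrm (x t₀ - γ t₀) = Real.sqrt ((nrm (x t₀ - γ t₀))^2) := by
          rw [Real.sqrt_sq (nrm_nonneg _)]
      _ ≤ Real.sqrt (δ₀ / κ) := Real.sqrt_le_sqrt h2
      _ = Real.sqrt δ₀ / Real.sqrt κ := Real.sqrt_div hδ₀.le κ
  have htri : nrm (x t - γ t) ≤ nrm (x t₀ - γ t₀) + nrm ((x t - γ t) - (x t₀ - γ t₀)) := by
    rw [nrm_eq_norm_toL2, nrm_eq_norm_toL2, nrm_eq_norm_toL2, map_sub]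
    calc ‖toL2 (x t - γ t)‖
        = ‖toL2 (x t₀ - γ t₀) + (toL2 (x t - γ t) - toL2 (x t₀ - γ t₀))‖ := by
          congr 1; abel
      _ ≤ _ := norm_add_le _ _
  have hCT : C * (t - t₀) ≤ (Real.sqrt lam - Real.sqrt δ₀) / Real.sqrt κ := by
    calc C * (t - t₀) ≤ C * T := by
          have := ht.2
          gcongr
          linarith
      _ ≤ _ := hTbound
  have hfin : nrm (x t - γ t) ≤ Real.sqrt lam / Real.sqrt κ := by
    have hpa := partA t ht
    have h1 : nrm ((x t - γ t) - (x t₀ - γ t₀)) ≤ (Real.sqrt lam - Real.sqrt δ₀) / Real.sqrt κ :=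
      hpa.trans hCT
    calc nrm (x t - γ t) ≤ Real.sqrt δ₀ / Real.sqrt κ +
          (Real.sqrt lam - Real.sqrt δ₀) / Real.sqrt κ := by linarith [htri, h0, h1]
      _ = Real.sqrt lam / Real.sqrt κ := by ring
  rw [hJnrm]
  have hsq : (nrm (x t - γ t))^2 ≤ (Real.sqrt lam / Real.sqrt κ)^2 := by
    have h0' : 0 ≤ Real.sqrt lam / Real.sqrt κ := by positivity
    exact pow_le_pow_left₀ (nrm_nonneg _) hfin 2
  have : (Real.sqrt lam / Real.sqrt κ)^2 = lam / κ := by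
    rw [div_pow, Real.sq_sqrt hlam0.le, Real.sq_sqrt hκ.le]
  rw [this] at hsq
  calc κ * (nrm (x t - γ t))^2 ≤ κ * (lam / κ) := by nlinarith
    _ = lam := by field_simp
end
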